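/- Let a be a real number. The inequality ∑_{j=1}^n C(n + a − j, n − j) sin(jx) sin(jy)/j > 0 holds for all integers n ≥ 1 and all x, y ∈ (0, π) if and only if a ≥ 1. -/

import Mathlib

open Real Finset

/-- Generalized binomial coefficient `(a + k choose k) = ∏_{ν=1}^{k} (a+ν)/ν`. -/
noncomputable def gbinom (a : ℝ) (k : ℕ) : ℝ := ∏ ν ∈ Finset.Icc 1 k, (a + ν) / ν

/-- `S n a x = ∑_{j=1}^n C(n+a−j, n−j) sin(jx)`. -/
noncomputable def S (n : ℕ) (a : ℝ) (x : ℝ) : ℝ :=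
  ∑ j ∈ Finset.Icc 1 n, gbinom a (n - j) * Real.sin (j * x)

/-- `Theta n a x y = ∑_{j=1}^n C(n+a−j, n−j) sin(jx) sin(jy) / j`. -/
noncomputable def Theta (n : ℕ) (a : ℝ) (x y : ℝ) : ℝ :=
  ∑ j ∈ Finset.Icc 1 n, gbinom a (n - j) * Real.sin (j * x) * Real.sin (j * y) / j

lemma gbinom_zero (a : ℝ) : gbinom a 0 = 1 := by simp [gbinom]

lemma gbinom_succ (a : ℝ) (k : ℕ) :
    gbinom a (k+1) = gbinom a k * (a + (k+1)) / (k+1) := by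
  rw [gbinom, gbinom, Finset.prod_Icc_succ_top (by omega)]
  push_cast; ring

lemma gbinom_one (k : ℕ) : gbinom (1:ℝ) k = k + 1 := by
  induction k with
  | zero => simp [gbinom_zero]
  | succ k ih =>
      rw [gbinom_succ, ih]
      have : ((k:ℝ)+1) ≠ 0 := by positivity
      field_simp; push_cast; ring

lemma gbinom_shift (b : ℝ) (k : ℕ) :
    gbinom (b - 1) (k + 1) = gbinom b k * b / (k + 1) := by
  induction k with
  | zero => simp [gbinom_zero, gbinom, Finset.Icc_self]
  | succ k ih =>
      rw [gbinom_succ, ih, gbinom_succ]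
      have h1 : ((k:ℝ)+1) ≠ 0 := by positivity
      have h2 : ((k:ℝ)+1+1) ≠ 0 := by positivity
      push_cast
      field_simp
      ring

lemma gbinom_pos {a : ℝ} (ha : 0 < a + 1) (k : ℕ) : 0 < gbinom a k := by
  refine Finset.prod_pos (fun ν hν => ?_)
  simp only [Finset.mem_Icc] at hν
  have h1 : (1:ℝ) ≤ (ν:ℝ) := by exact_mod_cast hν.1
  have : 0 < a + ν := by linarith
  positivity

lemma gbinom_diff (b : ℝ) (k : ℕ) :
    gbinom b (k+1) - gbinom b k = gbinom (b-1) (k+1) := by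
  rw [gbinom_shift, gbinom_succ]
  have h1 : ((k:ℝ)+1) ≠ 0 := by positivity
  field_simp
  ring

/-- second differences of `k ↦ gbinom a k` -/
noncomputable def del (a : ℝ) : ℕ → ℝ
  | 0 => 1
  | 1 => a - 1
  | (k+2) => gbinom a (k+2) - 2 * gbinom a (k+1) + gbinom a k

lemma del_eq (a : ℝ) (k : ℕ) :
    del a (k+2) = gbinom (a-1) (k+1) * (a-1) / (k+2) := by
  have h1 : del a (k+2)
      = (gbinom a (k+2) - gbinom a (k+1)) - (gbinom a (k+1) - gbinom a k) := by
    show gbinom a (k+2) - 2 * gbinom a (k+1) + gbinom a k = _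
    ring
  rw [h1, gbinom_diff, gbinom_diff, gbinom_diff (a-1) (k+1), gbinom_shift]
  push_cast
  ring

lemma del_nonneg {a : ℝ} (ha : 1 ≤ a) : ∀ k, 0 ≤ del a k
  | 0 => by norm_num [del]
  | 1 => by simp only [del]; linarith
  | (k+2) => by
      rw [del_eq]
      have h1 : 0 < gbinom (a-1) (k+1) := gbinom_pos (by linarith) _
      have h2 : (0:ℝ) ≤ a - 1 := by linarith
      positivity

lemma del_sum (a : ℝ) (K : ℕ) :
    ∑ k ∈ Finset.range (K+2), del a k = gbinom a (K+1) - gbinom a K := by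
  induction K with
  | zero =>
      simp [Finset.sum_range_succ, del, gbinom_zero, gbinom_succ a 0]
  | succ K ih =>
      rw [Finset.sum_range_succ, ih]
      show _ = gbinom a (K+2) - gbinom a (K+1)
      have : del a (K+2) = gbinom a (K+2) - 2 * gbinom a (K+1) + gbinom a K := rfl
      rw [this]; ring

lemma del_weighted_sum (a : ℝ) (K : ℕ) :
    ∑ k ∈ Finset.range (K+1), del a k * ((K:ℝ) + 1 - k) = gbinom a K := by
  induction K with
  | zero => norm_num [del, gbinom_zero]
  | succ K ih =>
      have h1 : ∑ k ∈ Finset.range (K+2), del a k * (((K:ℝ)+1) + 1 - k)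
          = ∑ k ∈ Finset.range (K+2), (del a k * ((K:ℝ) + 1 - k) + del a k) := by
        refine Finset.sum_congr rfl (fun k _ => ?_); ring
      push_cast
      rw [h1, Finset.sum_add_distrib, Finset.sum_range_succ, ih, del_sum]
      push_cast
      ring

lemma sumDelGbinom (a : ℝ) {j n : ℕ} (hj : j ≤ n) :
    ∑ m ∈ Finset.Icc j n, del a (n - m) * gbinom 1 (m - j) = gbinom a (n - j) := by
  rw [← Finset.Ico_add_one_right_eq_Icc, Finset.sum_Ico_eq_sum_range]
  set K := n - j with hK
  have hr : n + 1 - j = K + 1 := by omega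
  rw [hr]
  calc ∑ i ∈ Finset.range (K+1), del a (n - (j+i)) * gbinom 1 (j + i - j)
      = ∑ i ∈ Finset.range (K+1),
          (fun k => del a k * ((K:ℝ) + 1 - (k:ℝ))) (K + 1 - 1 - i) := by
        refine Finset.sum_congr rfl (fun i hi => ?_)
        simp only [Finset.mem_range] at hi
        have h1 : n - (j+i) = K - i := by omega
        have h2 : j + i - j = i := by omega
        have h3 : K + 1 - 1 - i = K - i := by omega
        have h4 : ((K - i : ℕ) : ℝ) = (K:ℝ) - (i:ℝ) := by
          have : i ≤ K := by omega
          push_cast [this]; ring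
        rw [h1, h2, h3, gbinom_one]
        show _ = del a (K-i) * ((K:ℝ) + 1 - ((K - i : ℕ):ℝ))
        rw [h4]
        ring
    _ = ∑ i ∈ Finset.range (K+1), del a i * ((K:ℝ) + 1 - i) := by
        simpa using Finset.sum_range_reflect (fun k => del a k * ((K:ℝ) + 1 - (k:ℝ))) (K+1)
    _ = gbinom a K := del_weighted_sum a K

lemma theta_decomp (a : ℝ) (n : ℕ) (x y : ℝ) :
    Theta n a x y = ∑ m ∈ Finset.Icc 1 n, del a (n - m) * Theta m 1 x y := by
  have hrhs : ∑ m ∈ Finset.Icc 1 n, del a (n - m) * Theta m 1 x y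
      = ∑ m ∈ Finset.Icc 1 n, ∑ j ∈ Finset.Icc 1 m,
          del a (n - m) * (gbinom 1 (m - j) * Real.sin (j*x) * Real.sin (j*y) / j) := by
    refine Finset.sum_congr rfl (fun m _ => ?_)
    rw [Theta, Finset.mul_sum]
  rw [hrhs,
    Finset.sum_comm' (t' := Finset.Icc 1 n) (s' := fun j => Finset.Icc j n)
      (by intro m j; simp only [Finset.mem_Icc]; omega)]
  rw [Theta]
  refine Finset.sum_congr rfl (fun j hj => ?_)
  simp only [Finset.mem_Icc] at hj
  have h1 : ∑ m ∈ Finset.Icc j n,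
        del a (n-m) * (gbinom 1 (m-j) * Real.sin (j*x) * Real.sin (j*y) / j)
      = (∑ m ∈ Finset.Icc j n, del a (n-m) * gbinom 1 (m-j))
          * (Real.sin (j*x) * Real.sin (j*y) / j) := by
    rw [Finset.sum_mul]
    refine Finset.sum_congr rfl (fun m _ => ?_)
    ring
  rw [h1, sumDelGbinom a hj.2]
  ring

lemma abs_sin_nat_le (k : ℕ) {t : ℝ} (ht : 0 ≤ Real.sin t) :
    |Real.sin (k * t)| ≤ k * Real.sin t := by
  induction k with
  | zero => simp
  | succ k ih =>
      have h : ((k:ℝ)+1)*t = (k:ℝ)*t + t := by ring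
      push_cast
      rw [h, Real.sin_add]
      calc |Real.sin (k*t) * Real.cos t + Real.cos (k*t) * Real.sin t|
          ≤ |Real.sin (k*t) * Real.cos t| + |Real.cos (k*t) * Real.sin t| := abs_add_le _ _
        _ ≤ (k:ℝ) * Real.sin t + Real.sin t := by
            have h1 : |Real.sin ((k:ℝ)*t) * Real.cos t| ≤ (k:ℝ) * Real.sin t := by
              rw [abs_mul]
              calc |Real.sin ((k:ℝ)*t)| * |Real.cos t| ≤ ((k:ℝ) * Real.sin t) * 1 :=
                    mul_le_mul ih (Real.abs_cos_le_one t) (abs_nonneg _)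
                      (by positivity)
                _ = (k:ℝ) * Real.sin t := by ring
            have h2 : |Real.cos ((k:ℝ)*t) * Real.sin t| ≤ Real.sin t := by
              rw [abs_mul, abs_of_nonneg ht]
              exact mul_le_of_le_one_left ht (Real.abs_cos_le_one _)
            linarith
        _ = ((k:ℝ)+1) * Real.sin t := by ring

lemma abs_sin_nat_lt {k : ℕ} (hk : 2 ≤ k) {t : ℝ} (ht : t ∈ Set.Ioo 0 π) :
    |Real.sin (k * t)| < k * Real.sin t := by
  have hs : 0 < Real.sin t := Real.sin_pos_of_pos_of_lt_pi ht.1 ht.2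
  have hc : |Real.cos t| < 1 := by
    rw [← sq_lt_one_iff_abs_lt_one]
    nlinarith [Real.sin_sq_add_cos_sq t]
  induction k, hk using Nat.le_induction with
  | base =>
      have h2 : ((2:ℕ):ℝ) * t = 2 * t := by norm_num
      rw [h2, Real.sin_two_mul]
      have : |2 * Real.sin t * Real.cos t| = 2 * Real.sin t * |Real.cos t| := by
        rw [abs_mul, abs_of_nonneg (by positivity : (0:ℝ) ≤ 2 * Real.sin t)]
      rw [this]
      push_cast
      nlinarith
  | succ k hk ih =>
      have h : ((k:ℝ)+1)*t = (k:ℝ)*t + t := by ring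
      push_cast
      rw [h, Real.sin_add]
      have h1 : |Real.sin ((k:ℝ)*t) * Real.cos t| ≤ |Real.sin ((k:ℝ)*t)| :=
        (abs_mul _ _).le.trans (mul_le_of_le_one_right (abs_nonneg _) (Real.abs_cos_le_one t))
      have h2 : |Real.cos ((k:ℝ)*t) * Real.sin t| ≤ Real.sin t := by
        rw [abs_mul, abs_of_nonneg hs.le]
        exact mul_le_of_le_one_left hs.le (Real.abs_cos_le_one _)
      have h3 : |Real.sin ((k:ℝ)*t)| < (k:ℝ) * Real.sin t := by
        have := ih
        push_cast at this
        exact this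
      calc |Real.sin ((k:ℝ)*t) * Real.cos t + Real.cos ((k:ℝ)*t) * Real.sin t|
          ≤ |Real.sin ((k:ℝ)*t) * Real.cos t| + |Real.cos ((k:ℝ)*t) * Real.sin t| := abs_add_le _ _
        _ < (k:ℝ) * Real.sin t + Real.sin t := by linarith
        _ = ((k:ℝ)+1) * Real.sin t := by ring

lemma S_one (t : ℝ) : S 1 1 t = Real.sin t := by
  simp [S, gbinom_zero]

lemma S_succ (m : ℕ) (t : ℝ) :
    S (m+1) 1 t = S m 1 t + ∑ j ∈ Finset.Icc 1 (m+1), Real.sin (j*t) := by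
  rw [S, S, Finset.sum_Icc_succ_top (by omega : 1 ≤ m+1),
    Finset.sum_Icc_succ_top (by omega : 1 ≤ m+1)]
  have h : ∀ j ∈ Finset.Icc 1 m,
      gbinom 1 (m+1-j) * Real.sin (j*t)
        = gbinom 1 (m-j) * Real.sin (j*t) + Real.sin (j*t) := by
    intro j hj
    simp only [Finset.mem_Icc] at hj
    rw [gbinom_one, gbinom_one]
    have he : m + 1 - j = (m - j) + 1 := by omega
    rw [he]
    push_cast
    ring
  rw [Finset.sum_congr rfl h, Finset.sum_add_distrib]
  have : m + 1 - (m+1) = 0 := by omega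
  rw [this, gbinom_zero]
  ring

lemma sum_sin_closed (t : ℝ) : ∀ M : ℕ, 1 ≤ M →
    2 * (1 - Real.cos t) * ∑ j ∈ Finset.Icc 1 M, Real.sin (j*t)
      = Real.sin t + Real.sin ((M:ℝ)*t) - Real.sin (((M:ℝ)+1)*t) := by
  intro M hM
  induction M, hM using Nat.le_induction with
  | base =>
      simp only [Finset.Icc_self, Finset.sum_singleton, Nat.cast_one, one_mul]
      have : ((1:ℝ)+1)*t = 2*t := by ring
      rw [this, Real.sin_two_mul]
      ring
  | succ M hM ih =>
      rw [Finset.sum_Icc_succ_top (by omega : 1 ≤ M+1), mul_add, ih]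
      push_cast
      rw [show ((M:ℝ)+1+1)*t = ((M:ℝ)+1)*t + t from by ring,
        show (M:ℝ)*t = ((M:ℝ)+1)*t - t from by ring,
        Real.sin_add, Real.sin_sub]
      ring

lemma fejer_closed (t : ℝ) : ∀ m : ℕ, 1 ≤ m →
    2 * (1 - Real.cos t) * S m 1 t = ((m:ℝ)+1) * Real.sin t - Real.sin (((m:ℝ)+1)*t) := by
  intro m hm
  induction m, hm using Nat.le_induction with
  | base =>
      rw [S_one]
      have : ((1:ℕ):ℝ)+1 = 2 := by norm_num
      rw [this, Real.sin_two_mul]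
      ring
  | succ m hm ih =>
      rw [S_succ, mul_add, ih, sum_sin_closed t (m+1) (by omega)]
      push_cast
      ring

lemma fejer_pos {m : ℕ} (hm : 1 ≤ m) {t : ℝ} (ht : t ∈ Set.Ioo 0 π) : 0 < S m 1 t := by
  have hs : 0 < Real.sin t := Real.sin_pos_of_pos_of_lt_pi ht.1 ht.2
  have hc : Real.cos t < 1 := by
    nlinarith [Real.sin_sq_add_cos_sq t, Real.neg_one_le_cos t]
  have hb : Real.sin (((m:ℝ)+1)*t) < ((m:ℝ)+1) * Real.sin t := by
    have h := abs_sin_nat_lt (k := m+1) (by omega) ht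
    push_cast at h
    exact lt_of_le_of_lt (le_abs_self _) h
  have hfe := fejer_closed t m hm
  have h2 : 0 < 2 * (1 - Real.cos t) := by linarith
  by_contra hle
  push_neg at hle
  nlinarith [mul_nonpos_of_nonneg_of_nonpos h2.le hle]

lemma theta_one_pos {m : ℕ} (hm : 1 ≤ m) {x y : ℝ}
    (hx : x ∈ Set.Ioo 0 π) (hy : y ∈ Set.Ioo 0 π) : 0 < Theta m 1 x y := by
  obtain ⟨hx0, hxπ⟩ := hx
  obtain ⟨hy0, hyπ⟩ := hy
  set u := |x - y| with hu
  set v := min (x+y) (2*π - (x+y)) with hv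
  have hu0 : 0 ≤ u := abs_nonneg _
  have huv : u < v := by
    refine lt_min ?_ ?_
    · rw [abs_sub_lt_iff]; constructor <;> linarith
    · rw [abs_sub_lt_iff]; constructor <;> linarith
  have hvπ : v ≤ π := by
    rcases le_total (x+y) π with h | h
    · exact le_trans (min_le_left _ _) h
    · exact le_trans (min_le_right _ _) (by linarith)
  have hkey : ∀ j : ℕ, 1 ≤ j →
      Real.cos ((j:ℝ)*u) - Real.cos ((j:ℝ)*v)
        = 2 * Real.sin ((j:ℝ)*x) * Real.sin ((j:ℝ)*y) := by
    intro j hj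
    have hcu : Real.cos ((j:ℝ)*u) = Real.cos ((j:ℝ)*(x-y)) := by
      rcases abs_cases (x - y) with ⟨h, _⟩ | ⟨h, _⟩
      · rw [hu, h]
      · rw [hu, h, mul_neg, Real.cos_neg]
    have hcv : Real.cos ((j:ℝ)*v) = Real.cos ((j:ℝ)*(x+y)) := by
      rcases min_cases (x+y) (2*π - (x+y)) with ⟨h, _⟩ | ⟨h, _⟩
      · rw [hv, h]
      · rw [hv, h]
        have he : (j:ℝ)*(2*π - (x+y)) = ((j:ℤ):ℝ)*(2*π) - (j:ℝ)*(x+y) := by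
          push_cast; ring
        rw [he, Real.cos_int_mul_two_pi_sub]
    rw [hcu, hcv, show (j:ℝ)*(x-y) = (j:ℝ)*x - (j:ℝ)*y from by ring,
      show (j:ℝ)*(x+y) = (j:ℝ)*x + (j:ℝ)*y from by ring,
      Real.cos_sub, Real.cos_add]
    ring
  have hint : ∀ j : ℕ, 1 ≤ j →
      (∫ t in u..v, Real.sin ((j:ℝ)*t))
        = (Real.cos ((j:ℝ)*u) - Real.cos ((j:ℝ)*v)) / j := by
    intro j hj
    have hj0 : (j:ℝ) ≠ 0 := by positivity
    rw [intervalIntegral.integral_comp_mul_left (fun s => Real.sin s) hj0, integral_sin,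
      smul_eq_mul]
    field_simp
  have hScont : Continuous fun t => S m 1 t / 2 := by
    unfold S
    exact (continuous_finset_sum _ (fun j _ =>
      continuous_const.mul (Real.continuous_sin.comp
        (continuous_const.mul continuous_id)))).div_const 2
  have hTheta : Theta m 1 x y = ∫ t in u..v, S m 1 t / 2 := by
    have hInt : ∀ j ∈ Finset.Icc 1 m,
        IntervalIntegrable (fun t => gbinom 1 (m-j) / 2 * Real.sin ((j:ℝ)*t))
          MeasureTheory.volume u v := by
      intro j _
      exact (continuous_const.mul (Real.continuous_sin.comp
        (continuous_const.mul continuous_id))).intervalIntegrable u v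
    calc Theta m 1 x y
        = ∑ j ∈ Finset.Icc 1 m,
            gbinom 1 (m-j) / 2 * ∫ t in u..v, Real.sin ((j:ℝ)*t) := by
          rw [Theta]
          refine Finset.sum_congr rfl (fun j hj => ?_)
          simp only [Finset.mem_Icc] at hj
          rw [hint j hj.1, hkey j hj.1]
          have hj0 : (j:ℝ) ≠ 0 := by
            have : (1:ℝ) ≤ (j:ℝ) := by exact_mod_cast hj.1
            linarith
          field_simp
      _ = ∑ j ∈ Finset.Icc 1 m,
            ∫ t in u..v, gbinom 1 (m-j) / 2 * Real.sin ((j:ℝ)*t) := by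
          refine Finset.sum_congr rfl (fun j _ => ?_)
          rw [intervalIntegral.integral_const_mul]
      _ = ∫ t in u..v, ∑ j ∈ Finset.Icc 1 m,
            gbinom 1 (m-j) / 2 * Real.sin ((j:ℝ)*t) :=
          (intervalIntegral.integral_finset_sum hInt).symm
      _ = ∫ t in u..v, S m 1 t / 2 := by
          refine intervalIntegral.integral_congr (fun t _ => ?_)
          rw [S, Finset.sum_div]
          refine Finset.sum_congr rfl (fun j _ => ?_)
          ring
  rw [hTheta]
  refine intervalIntegral.intervalIntegral_pos_of_pos_on
    (hScont.intervalIntegrable u v) (fun t htuv => ?_) huv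
  have ht : t ∈ Set.Ioo 0 π :=
    ⟨lt_of_le_of_lt hu0 htuv.1, lt_of_lt_of_le htuv.2 hvπ⟩
  exact div_pos (fejer_pos hm ht) two_pos

theorem stmt_14 (a : ℝ) :
    (∀ n : ℕ, 1 ≤ n → ∀ x ∈ Set.Ioo 0 Real.pi, ∀ y ∈ Set.Ioo 0 Real.pi,
      0 < Theta n a x y) ↔ 1 ≤ a := by
  constructor
  · intro h
    by_contra hlt
    push_neg at hlt
    set t := min (Real.sqrt ((1-a)/2) / 2) 1 with htdef
    have ha2 : 0 < (1-a)/2 := by linarith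
    have ht0 : 0 < t := lt_min (by positivity) one_pos
    have ht1 : t ≤ 1 := min_le_right _ _
    have htπ : t < π := lt_of_le_of_lt ht1 (by linarith [Real.pi_gt_three])
    have hts : t ^ 2 ≤ (1-a)/8 := by
      have h1 : t ≤ Real.sqrt ((1-a)/2) / 2 := min_le_left _ _
      have h2 : t^2 ≤ (Real.sqrt ((1-a)/2) / 2)^2 := by
        apply sq_le_sq' <;> nlinarith
      have h3 : (Real.sqrt ((1-a)/2))^2 = (1-a)/2 := Real.sq_sqrt ha2.le
      nlinarith
    have hx : π - t ∈ Set.Ioo 0 π := ⟨by linarith, by linarith⟩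
    have hy : t ∈ Set.Ioo 0 π := ⟨ht0, htπ⟩
    have hpos := h 2 (by norm_num) (π - t) hx t hy
    have hcompute : Theta 2 a (π - t) t = Real.sin t ^ 2 * (a + 1 - 2 * Real.cos t ^ 2) := by
      have hIcc : Finset.Icc 1 2 = {1, 2} := by decide
      rw [Theta, hIcc]
      rw [Finset.sum_insert (by decide), Finset.sum_singleton]
      have hg1 : gbinom a (2-1) = a + 1 := by
        norm_num [gbinom, Finset.Icc_self]
      have hg0 : gbinom a (2-2) = 1 := gbinom_zero a
      rw [hg1, hg0]
      push_cast
      have hsx : Real.sin (1 * (π - t)) = Real.sin t := by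
        rw [one_mul, Real.sin_pi_sub]
      have hsx2 : Real.sin (2 * (π - t)) = - Real.sin (2*t) := by
        have : 2 * (π - t) = 2*π - 2*t := by ring
        rw [this, Real.sin_sub, Real.sin_two_pi, Real.cos_two_pi]
        ring
      rw [hsx, hsx2, one_mul, Real.sin_two_mul]
      ring
    have hsint : 0 < Real.sin t := Real.sin_pos_of_pos_of_lt_pi ht0 htπ
    have hcos : 1 - t^2/2 ≤ Real.cos t := Real.one_sub_sq_div_two_le_cos
    have hneg : Theta 2 a (π - t) t < 0 := by
      rw [hcompute]
      have hc2 : 1 - t^2 ≤ Real.cos t ^ 2 := by nlinarith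
      have : a + 1 - 2 * Real.cos t ^ 2 < 0 := by nlinarith
      nlinarith
    linarith
  · intro ha n hn x hx y hy
    rw [theta_decomp]
    refine Finset.sum_pos' ?_ ⟨n, by simp [hn], ?_⟩
    · intro m hm
      simp only [Finset.mem_Icc] at hm
      exact mul_nonneg (del_nonneg ha _) (theta_one_pos hm.1 hx hy).le
    · rw [Nat.sub_self]
      simpa [del] using theta_one_pos hn hx hy
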